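/- For any n ≥ k ≥ 1, the state |Φ₀ⁿ⟩ decomposes as |Φ₀ⁿ⟩ = (1/√2)( |Φ₀ᵏ⟩⊗|Φ₀^{n−k}⟩ − |Φ₁ᵏ⟩⊗|Φ₁^{n−k}⟩ ), where the first factor acts on the first k qubits and the second on the remaining n−k qubits. -/

import Mathlib

/-!
Up to the common normalisation `2^{-(m-1)/2}`, the amplitudes of `|Φ₀ᵐ⟩` and `|Φ₁ᵐ⟩` at `y` are
the real and imaginary parts of `i ^ Δ(y)`. The Hamming weight is additive under concatenation,
so `i ^ Δ(y) = i ^ Δ(y₁) * i ^ Δ(y₂)`, and taking real parts gives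
`Re (z w) = Re z Re w - Im z Im w`; the normalisations differ exactly by the factor `1/√2`.
-/

/-- Hamming weight of an m-bit string. -/
def hw {m : ℕ} (y : Fin m → Bool) : ℕ := (Finset.univ.filter (fun i => y i = true)).card

/-- The state |Φ₀ᵐ⟩. -/
noncomputable def Phi0 (m : ℕ) : (Fin m → Bool) → ℂ := fun y =>
  if hw y % 4 = 0 then (((Real.sqrt ((2:ℝ) ^ ((m:ℤ) - 1)))⁻¹ : ℝ) : ℂ)
  else if hw y % 4 = 2 then -(((Real.sqrt ((2:ℝ) ^ ((m:ℤ) - 1)))⁻¹ : ℝ) : ℂ)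
  else 0

/-- The state |Φ₁ᵐ⟩. -/
noncomputable def Phi1 (m : ℕ) : (Fin m → Bool) → ℂ := fun y =>
  if hw y % 4 = 1 then (((Real.sqrt ((2:ℝ) ^ ((m:ℤ) - 1)))⁻¹ : ℝ) : ℂ)
  else if hw y % 4 = 3 then -(((Real.sqrt ((2:ℝ) ^ ((m:ℤ) - 1)))⁻¹ : ℝ) : ℂ)
  else 0

open Complex

noncomputable def phiAmplitude (m : ℕ) : ℝ := (Real.sqrt ((2:ℝ) ^ ((m:ℤ) - 1)))⁻¹

lemma phiAmplitude_add (k m : ℕ) :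
    phiAmplitude (k + m) = (Real.sqrt 2)⁻¹ * (phiAmplitude k * phiAmplitude m) := by
  have hexp : (((k + m : ℕ) : ℤ) - 1) = 1 + (((k:ℤ) - 1) + ((m:ℤ) - 1)) := by push_cast; ring
  rw [phiAmplitude, hexp, zpow_add₀ two_ne_zero, zpow_add₀ two_ne_zero, zpow_one,
    Real.sqrt_mul zero_le_two, Real.sqrt_mul (by positivity), mul_inv, mul_inv]
  rfl

lemma hw_append (k m : ℕ) (y : Fin (k + m) → Bool) :
    hw y = hw (fun i => y (Fin.castAdd m i)) + hw (fun i => y (Fin.natAdd k i)) := by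
  simp only [hw, Finset.card_filter, Fin.sum_univ_add]

lemma I_pow_re (n : ℕ) :
    ((I ^ n).re : ℂ) = if n % 4 = 0 then 1 else if n % 4 = 2 then -1 else 0 := by
  rw [I_pow_eq_pow_mod]
  have : n % 4 < 4 := Nat.mod_lt n four_pos
  interval_cases n % 4 <;> simp

lemma I_pow_im (n : ℕ) :
    ((I ^ n).im : ℂ) = if n % 4 = 1 then 1 else if n % 4 = 3 then -1 else 0 := by
  rw [I_pow_eq_pow_mod]
  have : n % 4 < 4 := Nat.mod_lt n four_pos
  interval_cases n % 4 <;> simp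

lemma Phi0_eq_re_I_pow_hw (m : ℕ) (y : Fin m → Bool) :
    Phi0 m y = phiAmplitude m * (I ^ hw y).re := by
  rw [I_pow_re, Phi0, phiAmplitude]
  split_ifs <;> simp

lemma Phi1_eq_im_I_pow_hw (m : ℕ) (y : Fin m → Bool) :
    Phi1 m y = phiAmplitude m * (I ^ hw y).im := by
  rw [I_pow_im, Phi1, phiAmplitude]
  split_ifs <;> simp

theorem stmt1_general (k m : ℕ) (y : Fin (k + m) → Bool) :
    Phi0 (k + m) y =
      (((Real.sqrt 2)⁻¹ : ℝ) : ℂ) *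
        (Phi0 k (fun i => y (Fin.castAdd m i)) * Phi0 m (fun i => y (Fin.natAdd k i))
          - Phi1 k (fun i => y (Fin.castAdd m i)) * Phi1 m (fun i => y (Fin.natAdd k i))) := by
  simp only [Phi0_eq_re_I_pow_hw, Phi1_eq_im_I_pow_hw, hw_append k m y, pow_add, mul_re,
    phiAmplitude_add k m]
  push_cast
  ring

/-- |Φ₀ⁿ⟩ = (1/√2)(|Φ₀ᵏ⟩⊗|Φ₀^{n−k}⟩ − |Φ₁ᵏ⟩⊗|Φ₁^{n−k}⟩) for n = k + m, k ≥ 1. -/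
theorem stmt1 (k m : ℕ) (hk : 1 ≤ k) (y : Fin (k + m) → Bool) :
    Phi0 (k + m) y =
      (((Real.sqrt 2)⁻¹ : ℝ) : ℂ) *
        (Phi0 k (fun i => y (Fin.castAdd m i)) * Phi0 m (fun i => y (Fin.natAdd k i))
          - Phi1 k (fun i => y (Fin.castAdd m i)) * Phi1 m (fun i => y (Fin.natAdd k i))) :=
  stmt1_general k m y
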